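/- arXiv:1109.2281 — 4 statements merged into one kernel-verified Lean document; each statement's English description precedes it below -/
import Mathlib

section
/- The cross product P of rank 3 induces a cross product of rank 2 on the orthogonal complement of e_0: for all u, v ∈ ℝ^8 orthogonal to e_0, the vector P(e_0, u, v) is orthogonal to e_0, to u, and to v, and satisfies ‖P(e_0,u,v)‖² = ‖u‖²‖v‖² − ⟨u,v⟩². -/
open RealInnerProductSpace

noncomputable section

/-- Euclidean space `ℝ^8`. -/
abbrev E8 : Type := EuclideanSpace ℝ (Fin 8)

/-- The standard orthonormal basis vectors `e_0, …, e_7` of `ℝ^8`. -/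
def e (i : Fin 8) : E8 := EuclideanSpace.single i 1

/-- The elementary alternating 4-form `e^i ∧ e^j ∧ e^k ∧ e^l` evaluated on `(u,v,w,x)`. -/
def wedge4 (i j k l : Fin 8) (u v w x : E8) : ℝ :=
  Matrix.det !![u i, u j, u k, u l;
                v i, v j, v k, v l;
                w i, w j, w k, w l;
                x i, x j, x k, x l]

/-- The standard `Spin(7)`-form `φ₀` on `ℝ^8`:
`φ₀ = e^{0145}+e^{0167}+e^{2345}+e^{2367}+e^{0246}−e^{0257}−e^{1346}+e^{1357}
     −e^{0347}−e^{0356}−e^{1247}−e^{1256}+e^{0123}+e^{4567}`. -/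
def phi0 (u v w x : E8) : ℝ :=
    wedge4 0 1 4 5 u v w x + wedge4 0 1 6 7 u v w x + wedge4 2 3 4 5 u v w x
  + wedge4 2 3 6 7 u v w x + wedge4 0 2 4 6 u v w x - wedge4 0 2 5 7 u v w x
  - wedge4 1 3 4 6 u v w x + wedge4 1 3 5 7 u v w x - wedge4 0 3 4 7 u v w x
  - wedge4 0 3 5 6 u v w x - wedge4 1 2 4 7 u v w x - wedge4 1 2 5 6 u v w x
  + wedge4 0 1 2 3 u v w x + wedge4 4 5 6 7 u v w x

/-- The triple cross product `P : ℝ^8 × ℝ^8 × ℝ^8 → ℝ^8`, determined by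
`⟨P(u,v,w), x⟩ = φ₀(u,v,w,x)` for all `x ∈ ℝ^8`. -/
def P (u v w : E8) : E8 :=
  (WithLp.equiv 2 (Fin 8 → ℝ)).symm (fun i => phi0 u v w (e i))

/-!
Contracting `φ₀` with `e_0` leaves the associative 3-form
`e^{123}+e^{145}+e^{167}+e^{246}−e^{257}−e^{347}−e^{356}` on `e_0^⊥ ≅ ℝ^7`, so `P(e_0, u, v)` is
the seven-dimensional (octonionic) cross product of `u` and `v`, with explicit bilinear
coordinates. Orthogonality to `e_0`, `u` and `v` is then the alternation of that 3-form, and the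
norm identity is the seven-dimensional Lagrange identity, a polynomial identity in the coordinates.
-/

theorem Matrix.det_fin_four {R : Type*} [CommRing R] (M : Matrix (Fin 4) (Fin 4) R) :
    M.det =
      M 0 0 * M 1 1 * M 2 2 * M 3 3 - M 0 0 * M 1 1 * M 2 3 * M 3 2 -
      M 0 0 * M 1 2 * M 2 1 * M 3 3 + M 0 0 * M 1 2 * M 2 3 * M 3 1 +
      M 0 0 * M 1 3 * M 2 1 * M 3 2 - M 0 0 * M 1 3 * M 2 2 * M 3 1 -
      M 0 1 * M 1 0 * M 2 2 * M 3 3 + M 0 1 * M 1 0 * M 2 3 * M 3 2 +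
      M 0 1 * M 1 2 * M 2 0 * M 3 3 - M 0 1 * M 1 2 * M 2 3 * M 3 0 -
      M 0 1 * M 1 3 * M 2 0 * M 3 2 + M 0 1 * M 1 3 * M 2 2 * M 3 0 +
      M 0 2 * M 1 0 * M 2 1 * M 3 3 - M 0 2 * M 1 0 * M 2 3 * M 3 1 -
      M 0 2 * M 1 1 * M 2 0 * M 3 3 + M 0 2 * M 1 1 * M 2 3 * M 3 0 +
      M 0 2 * M 1 3 * M 2 0 * M 3 1 - M 0 2 * M 1 3 * M 2 1 * M 3 0 -
      M 0 3 * M 1 0 * M 2 1 * M 3 2 + M 0 3 * M 1 0 * M 2 2 * M 3 1 +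
      M 0 3 * M 1 1 * M 2 0 * M 3 2 - M 0 3 * M 1 1 * M 2 2 * M 3 0 -
      M 0 3 * M 1 2 * M 2 0 * M 3 1 + M 0 3 * M 1 2 * M 2 1 * M 3 0 := by
  simp [Matrix.det_succ_row_zero, Fin.sum_univ_succ, Fin.succAbove]
  ring

theorem inner_e_right (x : E8) (i : Fin 8) : ⟪x, e i⟫ = x i := by
  simp [e, EuclideanSpace.inner_single_right]

/-- The cross product on `e_0^⊥ ≅ ℝ^7`: coordinate `i` is `(e_0 ⌟ φ₀)(u, v, e_i)`. -/
def cross7 (u v : E8) : E8 :=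
  !₂[0,
    u 2 * v 3 - u 3 * v 2 + u 4 * v 5 - u 5 * v 4 + u 6 * v 7 - u 7 * v 6,
    u 3 * v 1 - u 1 * v 3 + u 4 * v 6 - u 6 * v 4 + u 7 * v 5 - u 5 * v 7,
    u 1 * v 2 - u 2 * v 1 + u 6 * v 5 - u 5 * v 6 + u 7 * v 4 - u 4 * v 7,
    u 5 * v 1 - u 1 * v 5 + u 6 * v 2 - u 2 * v 6 + u 3 * v 7 - u 7 * v 3,
    u 1 * v 4 - u 4 * v 1 + u 2 * v 7 - u 7 * v 2 + u 3 * v 6 - u 6 * v 3,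
    u 7 * v 1 - u 1 * v 7 + u 2 * v 4 - u 4 * v 2 + u 5 * v 3 - u 3 * v 5,
    u 1 * v 6 - u 6 * v 1 + u 4 * v 3 - u 3 * v 4 + u 5 * v 2 - u 2 * v 5]

theorem P_e_zero (u v : E8) : P (e 0) u v = cross7 u v := by
  ext i
  fin_cases i <;> simp [P, cross7, phi0, wedge4, Matrix.det_fin_four, e, PiLp.single_apply] <;> ring

theorem inner_cross7_e_zero (u v : E8) : ⟪cross7 u v, e 0⟫ = 0 := by
  simp [inner_e_right, cross7]

theorem inner_cross7_self_left (u v : E8) : ⟪cross7 u v, u⟫ = 0 := by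
  simp only [cross7, PiLp.inner_apply, RCLike.inner_apply, Real.ringHom_apply, Fin.sum_univ_eight,
    Matrix.cons_val]
  ring

theorem inner_cross7_self_right (u v : E8) : ⟪cross7 u v, v⟫ = 0 := by
  simp only [cross7, PiLp.inner_apply, RCLike.inner_apply, Real.ringHom_apply, Fin.sum_univ_eight,
    Matrix.cons_val]
  ring

theorem norm_cross7_sq {u v : E8} (hu : u 0 = 0) (hv : v 0 = 0) :
    ‖cross7 u v‖ ^ 2 = ‖u‖ ^ 2 * ‖v‖ ^ 2 - ⟪u, v⟫ ^ 2 := by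
  simp only [← real_inner_self_eq_norm_sq, cross7, PiLp.inner_apply, RCLike.inner_apply,
    Real.ringHom_apply, Fin.sum_univ_eight, Matrix.cons_val, hu, hv]
  ring

/-- `P` induces a rank-2 cross product on the orthogonal complement of `e_0`. -/
theorem P_induces_rank_two_cross_product (u v : E8)
    (hu : ⟪u, e 0⟫ = 0) (hv : ⟪v, e 0⟫ = 0) :
    ⟪P (e 0) u v, e 0⟫ = 0 ∧ ⟪P (e 0) u v, u⟫ = 0 ∧ ⟪P (e 0) u v, v⟫ = 0 ∧
      ‖P (e 0) u v‖ ^ 2 = ‖u‖ ^ 2 * ‖v‖ ^ 2 - ⟪u, v⟫ ^ 2 := by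
  rw [inner_e_right] at hu hv
  rw [P_e_zero]
  exact ⟨inner_cross7_e_zero u v, inner_cross7_self_left u v, inner_cross7_self_right u v,
    norm_cross7_sq hu hv⟩
end
end

section
/- For all indices λ, μ, ν ∈ {1,…,7} with λ ≠ μ and λ ≠ ν, one has ⟨e_{λ×μ}, e_{λ×ν}⟩ = ⟨e_μ, e_ν⟩, where e_{λ×μ} := P(e_0, e_λ, e_μ) for λ ≠ μ and e_{λ×λ} := −e_0. -/
open RealInnerProductSpace

noncomputable section

/-! On basis vectors everything is an integer: `φ₀(e_a, e_b, e_c, e_d)` is a signed sum of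
4 × 4 determinants of 0/1 matrices. The polarised triple cross product identity
`|P(u, v, w)|² = |u ∧ v ∧ w|²` with `u = e₀` then becomes a finite identity between integers,
checked by evaluation: `⟨P(e₀, e_b, e_c), P(e₀, e_b, e_d)⟩` is the determinant of the matrix of
inner products of `(e₀, e_b, e_c)` against `(e₀, e_b, e_d)`. When `b ≠ 0`, `c ≠ 0` and `b ≠ c`
this matrix is upper triangular with diagonal `(1, 1, ⟨e_c, e_d⟩)`. -/

-- Unlike `Matrix.det`, this cofactor expansion can be evaluated by `decide`.
def det4 {R : Type*} [CommRing R] (A : Matrix (Fin 4) (Fin 4) R) : R :=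
    A 0 0 * (A 1 1 * (A 2 2 * A 3 3 - A 2 3 * A 3 2)
           - A 1 2 * (A 2 1 * A 3 3 - A 2 3 * A 3 1)
           + A 1 3 * (A 2 1 * A 3 2 - A 2 2 * A 3 1))
  - A 0 1 * (A 1 0 * (A 2 2 * A 3 3 - A 2 3 * A 3 2)
           - A 1 2 * (A 2 0 * A 3 3 - A 2 3 * A 3 0)
           + A 1 3 * (A 2 0 * A 3 2 - A 2 2 * A 3 0))
  + A 0 2 * (A 1 0 * (A 2 1 * A 3 3 - A 2 3 * A 3 1)
           - A 1 1 * (A 2 0 * A 3 3 - A 2 3 * A 3 0)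
           + A 1 3 * (A 2 0 * A 3 1 - A 2 1 * A 3 0))
  - A 0 3 * (A 1 0 * (A 2 1 * A 3 2 - A 2 2 * A 3 1)
           - A 1 1 * (A 2 0 * A 3 2 - A 2 2 * A 3 0)
           + A 1 2 * (A 2 0 * A 3 1 - A 2 1 * A 3 0))

theorem Matrix.det_eq_det4 {R : Type*} [CommRing R] (A : Matrix (Fin 4) (Fin 4) R) :
    A.det = det4 A := by
  simp [Matrix.det_succ_row_zero, Fin.sum_univ_succ, det4, Fin.succAbove]
  ring

def kroneckerDelta (a b : Fin 8) : ℤ := if a = b then 1 else 0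

def wedge4Int (i j k l a b c d : Fin 8) : ℤ :=
  det4 (Matrix.of fun r s => kroneckerDelta (![i, j, k, l] s) (![a, b, c, d] r))

def phi0Int (a b c d : Fin 8) : ℤ :=
    wedge4Int 0 1 4 5 a b c d + wedge4Int 0 1 6 7 a b c d + wedge4Int 2 3 4 5 a b c d
  + wedge4Int 2 3 6 7 a b c d + wedge4Int 0 2 4 6 a b c d - wedge4Int 0 2 5 7 a b c d
  - wedge4Int 1 3 4 6 a b c d + wedge4Int 1 3 5 7 a b c d - wedge4Int 0 3 4 7 a b c d
  - wedge4Int 0 3 5 6 a b c d - wedge4Int 1 2 4 7 a b c d - wedge4Int 1 2 5 6 a b c d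
  + wedge4Int 0 1 2 3 a b c d + wedge4Int 4 5 6 7 a b c d

theorem sum_phi0Int_mul_phi0Int (b c d : Fin 8) :
    ∑ i, phi0Int 0 b c i * phi0Int 0 b d i =
      kroneckerDelta 0 0 * kroneckerDelta b b * kroneckerDelta c d
        - kroneckerDelta 0 0 * kroneckerDelta b d * kroneckerDelta c b
        - kroneckerDelta 0 b * kroneckerDelta b 0 * kroneckerDelta c d
        + kroneckerDelta 0 b * kroneckerDelta b d * kroneckerDelta c 0
        + kroneckerDelta 0 d * kroneckerDelta b 0 * kroneckerDelta c b
        - kroneckerDelta 0 d * kroneckerDelta b b * kroneckerDelta c 0 := by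
  revert b c d
  decide +kernel

theorem e_apply (a i : Fin 8) : e a i = kroneckerDelta i a := by
  simp [e, kroneckerDelta, apply_ite (Int.cast : ℤ → ℝ)]

theorem inner_e_e (a b : Fin 8) : ⟪e a, e b⟫ = kroneckerDelta a b := by
  simp [e, kroneckerDelta, EuclideanSpace.inner_single_left]

theorem wedge4_e (i j k l a b c d : Fin 8) :
    wedge4 i j k l (e a) (e b) (e c) (e d) = wedge4Int i j k l a b c d := by
  rw [wedge4, wedge4Int, ← Matrix.det_eq_det4, Int.cast_det]
  congr 1
  ext r s
  fin_cases r <;> fin_cases s <;> simp [e_apply]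

theorem phi0_e (a b c d : Fin 8) : phi0 (e a) (e b) (e c) (e d) = phi0Int a b c d := by
  simp only [phi0, phi0Int, wedge4_e]
  push_cast
  rfl

theorem inner_P_P (u v w x : E8) :
    ⟪P u v w, P u v x⟫ = ∑ i, phi0 u v w (e i) * phi0 u v x (e i) := by
  simp [P, PiLp.inner_apply, mul_comm]

theorem inner_P_e_zero_eq_det (b c d : Fin 8) :
    ⟪P (e 0) (e b) (e c), P (e 0) (e b) (e d)⟫ =
      !![⟪e 0, e 0⟫, ⟪e 0, e b⟫, ⟪e 0, e d⟫;
         ⟪e b, e 0⟫, ⟪e b, e b⟫, ⟪e b, e d⟫;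
         ⟪e c, e 0⟫, ⟪e c, e b⟫, ⟪e c, e d⟫].det := by
  rw [inner_P_P, Matrix.det_fin_three]
  simp only [phi0_e, inner_e_e, Matrix.of_apply, Matrix.cons_val', Matrix.cons_val_zero,
    Matrix.cons_val_fin_one, Matrix.cons_val_one, Matrix.cons_val]
  exact_mod_cast sum_phi0Int_mul_phi0Int b c d

theorem inner_cross_eq_inner_general (l m n : Fin 8) (hl : l ≠ 0) (hm : m ≠ 0) (hlm : l ≠ m) :
    ⟪P (e 0) (e l) (e m), P (e 0) (e l) (e n)⟫ = ⟪e m, e n⟫ := by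
  rw [inner_P_e_zero_eq_det, Matrix.det_fin_three]
  simp only [inner_e_e]
  simp [kroneckerDelta, hl, hm, hl.symm, hlm.symm]

/-- For `λ, μ, ν ∈ {1,…,7}` with `λ ≠ μ` and `λ ≠ ν`:
`⟨e_{λ×μ}, e_{λ×ν}⟩ = ⟨e_μ, e_ν⟩`, where `e_{λ×μ} = P(e_0, e_λ, e_μ)` for `λ ≠ μ`. -/
theorem inner_cross_eq_inner (l m n : Fin 8) (hl : l ≠ 0) (hm : m ≠ 0) (hn : n ≠ 0)
    (hlm : l ≠ m) (hln : l ≠ n) :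
    ⟪P (e 0) (e l) (e m), P (e 0) (e l) (e n)⟫ = ⟪e m, e n⟫ :=
  inner_cross_eq_inner_general l m n hl hm hlm
end
end

section
/- For any two orthonormal vectors u, v ∈ ℝ^8, the cross product determines an almost complex structure on the orthogonal complement of span{u,v}: the linear map J : w ↦ P(u,v,w) maps the orthogonal complement of span{u,v} into itself, and J(J(w)) = −w for every w orthogonal to both u and v. -/
open RealInnerProductSpace

noncomputable section

/-!
Since `⟪P(u,v,w), x⟫ = φ₀(u,v,w,x)` and `φ₀` is alternating, `P(u,v,w)` is orthogonal to `u`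
and `v`. The square of `J = P(u,v,·)` is governed by the polynomial identity
`P(u,v,P(u,v,w)) = -|u ∧ v|² w + (|v|²⟪w,u⟫ - ⟪u,v⟫⟪w,v⟫) u + (|u|²⟪w,v⟫ - ⟪u,v⟫⟪w,u⟫) v`,
checked coordinatewise; for orthonormal `u, v` and `w ⊥ u, v` it reduces to `-w`.
-/

lemma wedge4_expand (i j k l : Fin 8) (u v w x : E8) : wedge4 i j k l u v w x =
    u i*v j*w k*x l - u i*v j*w l*x k - u i*v k*w j*x l + u i*v k*w l*x j
  + u i*v l*w j*x k - u i*v l*w k*x j - u j*v i*w k*x l + u j*v i*w l*x k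
  + u j*v k*w i*x l - u j*v k*w l*x i - u j*v l*w i*x k + u j*v l*w k*x i
  + u k*v i*w j*x l - u k*v i*w l*x j - u k*v j*w i*x l + u k*v j*w l*x i
  + u k*v l*w i*x j - u k*v l*w j*x i - u l*v i*w j*x k + u l*v i*w k*x j
  + u l*v j*w i*x k - u l*v j*w k*x i - u l*v k*w i*x j + u l*v k*w j*x i := by
  simp [wedge4, Matrix.det_succ_row_zero, Fin.sum_univ_succ, Fin.succAbove]
  ring

lemma wedge4_add_right (i j k l : Fin 8) (u v w x y : E8) :
    wedge4 i j k l u v w (x + y) = wedge4 i j k l u v w x + wedge4 i j k l u v w y := by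
  simp only [wedge4_expand, PiLp.add_apply]
  ring

lemma wedge4_smul_right (i j k l : Fin 8) (u v w : E8) (a : ℝ) (x : E8) :
    wedge4 i j k l u v w (a • x) = a * wedge4 i j k l u v w x := by
  simp only [wedge4_expand, PiLp.smul_apply, smul_eq_mul]
  ring

lemma wedge4_self_fst (i j k l : Fin 8) (u v w : E8) : wedge4 i j k l u v w u = 0 :=
  Matrix.det_zero_of_row_eq (i := 0) (j := 3) (by decide) (by ext c; fin_cases c <;> rfl)

lemma wedge4_self_snd (i j k l : Fin 8) (u v w : E8) : wedge4 i j k l u v w v = 0 :=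
  Matrix.det_zero_of_row_eq (i := 1) (j := 3) (by decide) (by ext c; fin_cases c <;> rfl)

lemma phi0_add_right (u v w x y : E8) : phi0 u v w (x + y) = phi0 u v w x + phi0 u v w y := by
  simp only [phi0, wedge4_add_right]
  ring

lemma phi0_smul_right (u v w : E8) (a : ℝ) (x : E8) : phi0 u v w (a • x) = a * phi0 u v w x := by
  simp only [phi0, wedge4_smul_right]
  ring

lemma phi0_self_fst (u v w : E8) : phi0 u v w u = 0 := by
  simp [phi0, wedge4_self_fst]

lemma phi0_self_snd (u v w : E8) : phi0 u v w v = 0 := by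
  simp [phi0, wedge4_self_snd]

lemma inner_P_eq_phi0 (u v w x : E8) : ⟪P u v w, x⟫ = phi0 u v w x := by
  let f : E8 →ₗ[ℝ] ℝ :=
    { toFun := phi0 u v w
      map_add' := phi0_add_right u v w
      map_smul' := phi0_smul_right u v w }
  have hx := (EuclideanSpace.basisFun (Fin 8) ℝ).sum_repr x
  simp only [EuclideanSpace.basisFun_apply, EuclideanSpace.basisFun_repr] at hx
  change _ = f x
  rw [← hx, map_sum, inner_sum]
  simp [f, inner_smul_right, EuclideanSpace.inner_single_right, P, e]

lemma inner_P_fst_eq_zero (u v w : E8) : ⟪P u v w, u⟫ = 0 := by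
  rw [inner_P_eq_phi0, phi0_self_fst]

lemma inner_P_snd_eq_zero (u v w : E8) : ⟪P u v w, v⟫ = 0 := by
  rw [inner_P_eq_phi0, phi0_self_snd]

lemma e_apply_s11 (m l : Fin 8) : e m l = if l = m then 1 else 0 := PiLp.single_apply _ _ _ _ _

set_option maxHeartbeats 1000000 in
theorem P_P_eq_smul_add_smul_add_smul (u v w : E8) : P u v (P u v w) =
    (⟪u, v⟫ ^ 2 - ⟪u, u⟫ * ⟪v, v⟫) • w + (⟪v, v⟫ * ⟪w, u⟫ - ⟪u, v⟫ * ⟪w, v⟫) • u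
      + (⟪u, u⟫ * ⟪w, v⟫ - ⟪u, v⟫ * ⟪w, u⟫) • v := by
  ext i
  fin_cases i <;>
  simp only [P, WithLp.equiv_symm_apply, phi0, wedge4_expand, e_apply_s11, PiLp.inner_apply,
    RCLike.inner_apply, conj_trivial, Fin.sum_univ_eight, PiLp.add_apply, PiLp.smul_apply,
    smul_eq_mul, Fin.isValue, Fin.reduceEq, if_true, if_false, mul_one, mul_zero, sub_zero,
    add_zero, zero_add, zero_sub, Fin.zero_eta, Fin.mk_one, Fin.reduceFinMk] <;>
  ring

/-- For orthonormal `u, v`, the map `w ↦ P(u,v,w)` is an almost complex structure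
on the orthogonal complement of `span{u,v}`. -/
theorem P_almost_complex_on_complement (u v : E8)
    (hu : ‖u‖ = 1) (hv : ‖v‖ = 1) (huv : ⟪u, v⟫ = 0) :
    ∀ w : E8, ⟪w, u⟫ = 0 → ⟪w, v⟫ = 0 →
      ⟪P u v w, u⟫ = 0 ∧ ⟪P u v w, v⟫ = 0 ∧ P u v (P u v w) = -w := by
  intro w hwu hwv
  refine ⟨inner_P_fst_eq_zero u v w, inner_P_snd_eq_zero u v w, ?_⟩
  simp [P_P_eq_smul_add_smul_add_smul, hu, hv, huv, hwu, hwv]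
end
end

section
/- For all vectors u ⊥ e_0 with ‖u‖ = 1 and all v, w ∈ ℝ^8 orthogonal to both e_0 and u, the induced 2-fold cross product preserves inner products: ⟨P(e_0,u,v), P(e_0,u,w)⟩ = ⟨v, w⟩. -/
open RealInnerProductSpace

noncomputable section

lemma Pc0 (u v : E8) : P (e 0) u v 0 = 0 := by
  simp [P, phi0, wedge4, e, Matrix.det_succ_row_zero, Fin.sum_univ_succ,
    EuclideanSpace.single_apply]

lemma Pc1 (u v : E8) : P (e 0) u v 1 =
    u 2 * v 3 - u 3 * v 2 + u 4 * v 5 - u 5 * v 4 + u 6 * v 7 - u 7 * v 6 := by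
  simp [P, phi0, wedge4, e, Matrix.det_succ_row_zero, Fin.sum_univ_succ,
    EuclideanSpace.single_apply]; ring

lemma Pc2 (u v : E8) : P (e 0) u v 2 =
    -(u 1 * v 3) + u 3 * v 1 + u 4 * v 6 - u 5 * v 7 - u 6 * v 4 + u 7 * v 5 := by
  simp [P, phi0, wedge4, e, Matrix.det_succ_row_zero, Fin.sum_univ_succ,
    EuclideanSpace.single_apply]; ring

lemma Pc3 (u v : E8) : P (e 0) u v 3 =
    u 1 * v 2 - u 2 * v 1 - u 4 * v 7 - u 5 * v 6 + u 6 * v 5 + u 7 * v 4 := by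
  simp [P, phi0, wedge4, e, Matrix.det_succ_row_zero, Fin.sum_univ_succ,
    EuclideanSpace.single_apply]; ring

lemma Pc4 (u v : E8) : P (e 0) u v 4 =
    -(u 1 * v 5) - u 2 * v 6 + u 3 * v 7 + u 5 * v 1 + u 6 * v 2 - u 7 * v 3 := by
  simp [P, phi0, wedge4, e, Matrix.det_succ_row_zero, Fin.sum_univ_succ,
    EuclideanSpace.single_apply]; ring

lemma Pc5 (u v : E8) : P (e 0) u v 5 =
    u 1 * v 4 + u 2 * v 7 + u 3 * v 6 - u 4 * v 1 - u 6 * v 3 - u 7 * v 2 := by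
  simp [P, phi0, wedge4, e, Matrix.det_succ_row_zero, Fin.sum_univ_succ,
    EuclideanSpace.single_apply]; ring

lemma Pc6 (u v : E8) : P (e 0) u v 6 =
    -(u 1 * v 7) + u 2 * v 4 - u 3 * v 5 - u 4 * v 2 + u 5 * v 3 + u 7 * v 1 := by
  simp [P, phi0, wedge4, e, Matrix.det_succ_row_zero, Fin.sum_univ_succ,
    EuclideanSpace.single_apply]; ring

lemma Pc7 (u v : E8) : P (e 0) u v 7 =
    u 1 * v 6 - u 2 * v 5 - u 3 * v 4 + u 4 * v 3 + u 5 * v 2 - u 6 * v 1 := by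
  simp [P, phi0, wedge4, e, Matrix.det_succ_row_zero, Fin.sum_univ_succ,
    EuclideanSpace.single_apply]; ring

/-- For unit `u ⊥ e_0` and `v, w` orthogonal to `e_0` and `u`, the induced 2-fold
cross product preserves inner products. -/
theorem induced_cross_product_isometry (u v w : E8)
    (hu0 : ⟪u, e 0⟫ = 0) (hu : ‖u‖ = 1)
    (hv0 : ⟪v, e 0⟫ = 0) (hvu : ⟪v, u⟫ = 0)
    (hw0 : ⟪w, e 0⟫ = 0) (hwu : ⟪w, u⟫ = 0) :
    ⟪P (e 0) u v, P (e 0) u w⟫ = ⟪v, w⟫ := by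
  have hu' : ⟪u, u⟫ = 1 := by
    rw [real_inner_self_eq_norm_sq, hu]; norm_num
  have hu00 : u 0 = 0 := by simpa [e, EuclideanSpace.inner_single_right] using hu0
  have hv00 : v 0 = 0 := by simpa [e, EuclideanSpace.inner_single_right] using hv0
  have hw00 : w 0 = 0 := by simpa [e, EuclideanSpace.inner_single_right] using hw0
  simp only [PiLp.inner_apply, RCLike.inner_apply, conj_trivial, Fin.sum_univ_eight]
    at hvu hwu hu' ⊢
  rw [Pc0, Pc1, Pc2, Pc3, Pc4, Pc5, Pc6, Pc7, Pc0, Pc1, Pc2, Pc3, Pc4, Pc5, Pc6, Pc7]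
  simp only [hu00, hv00, hw00] at hvu hwu hu' ⊢
  linear_combination
    (v 1 * w 1 + v 2 * w 2 + v 3 * w 3 + v 4 * w 4 + v 5 * w 5 + v 6 * w 6 + v 7 * w 7) * hu'
    - (w 1 * u 1 + w 2 * u 2 + w 3 * u 3 + w 4 * u 4 + w 5 * u 5 + w 6 * u 6 + w 7 * u 7) * hvu
end
end
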